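/- arXiv:2211.07222 — 2 statements merged into one kernel-verified Lean document; each statement's English description precedes it below -/
import Mathlib

section
/- (Parameter shift rule.) Let v, w ∈ ℝ^m, let A, B, S be m×m real matrices, and define f : ℝ → ℝ by f(θ) = vᵀ A ( I_m + sin²(θ)(S − I_m) ) B w. Then f is differentiable and for every θ ∈ ℝ, f′(θ) = f(θ + π/4) − f(θ − π/4). -/
open Matrix BigOperators Real

lemma affine_expr {m : ℕ} (v w : Fin m → ℝ)
    (A B S : Matrix (Fin m) (Fin m) ℝ) (s : ℝ) :
    v ⬝ᵥ ((A * ((1 : Matrix (Fin m) (Fin m) ℝ) + s • (S - 1)) * B) *ᵥ w)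
      = v ⬝ᵥ ((A * B) *ᵥ w) + s * (v ⬝ᵥ ((A * (S - 1) * B) *ᵥ w)) := by
  rw [mul_add, add_mul, mul_one, Matrix.mul_smul, Matrix.smul_mul, Matrix.add_mulVec,
    Matrix.smul_mulVec, dotProduct_add, dotProduct_smul, smul_eq_mul]

/-- Parameter shift rule: for `f(θ) = vᵀ A (I + sin²(θ)(S − I)) B w`, the function
`f` is differentiable with `f′(θ) = f(θ + π/4) − f(θ − π/4)`. -/
theorem parameter_shift_rule {m : ℕ} (v w : Fin m → ℝ)
    (A B S : Matrix (Fin m) (Fin m) ℝ) (θ : ℝ) :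
    HasDerivAt
      (fun t : ℝ =>
        v ⬝ᵥ ((A * ((1 : Matrix (Fin m) (Fin m) ℝ) + sin t ^ 2 • (S - 1)) * B) *ᵥ w))
      ((v ⬝ᵥ ((A * ((1 : Matrix (Fin m) (Fin m) ℝ) + sin (θ + π / 4) ^ 2 • (S - 1)) * B) *ᵥ w)) -
        (v ⬝ᵥ ((A * ((1 : Matrix (Fin m) (Fin m) ℝ) + sin (θ - π / 4) ^ 2 • (S - 1)) * B) *ᵥ w)))
      θ := by
  set a := v ⬝ᵥ ((A * B) *ᵥ w)
  set b := v ⬝ᵥ ((A * (S - 1) * B) *ᵥ w)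
  have hfun : (fun t : ℝ =>
      v ⬝ᵥ ((A * ((1 : Matrix (Fin m) (Fin m) ℝ) + sin t ^ 2 • (S - 1)) * B) *ᵥ w))
      = fun t : ℝ => a + sin t ^ 2 * b := by
    funext t; exact affine_expr v w A B S _
  rw [hfun, affine_expr, affine_expr]
  have key : (a + sin (θ + π / 4) ^ 2 * b) - (a + sin (θ - π / 4) ^ 2 * b)
      = (2 * sin θ * cos θ) * b := by
    have h1 : sin (θ + π / 4) ^ 2 = (1 - cos (2 * (θ + π / 4))) / 2 := by
      rw [sin_sq_eq_half_sub]; ring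
    have h2 : sin (θ - π / 4) ^ 2 = (1 - cos (2 * (θ - π / 4))) / 2 := by
      rw [sin_sq_eq_half_sub]; ring
    have h3 : 2 * (θ + π / 4) = 2 * θ + π / 2 := by ring
    have h4 : 2 * (θ - π / 4) = 2 * θ - π / 2 := by ring
    rw [h1, h2, h3, h4, cos_add_pi_div_two, cos_sub_pi_div_two, sin_two_mul]
    ring
  rw [key]
  have hd : HasDerivAt (fun t : ℝ => a + sin t ^ 2 * b) (2 * sin θ * cos θ * b) θ := by
    have h := ((Real.hasDerivAt_sin θ).fun_pow 2).mul_const b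
    have h2 := h.const_add a
    exact h2.congr_deriv (by ring)
  exact hd
end

section
/- Let g : ℝ^n → ℝ be a nonnegative function such that (i) every x with g(x) = 0 has all coordinates in ℤ, and (ii) g is entrywise periodic with period 2, i.e., g(x + 2 e_i) = g(x) for all x ∈ ℝ^n and all standard basis vectors e_i. Assume the feasible set G = { x ∈ ℝ^n : g(x) = 0 } is nonempty. Then the infimum of ‖x‖₂² over x ∈ G equals the infimum of card(x) over x ∈ G, where card(x) is the number of nonzero coordinates of x; in particular, there is a minimizer x* ∈ G of ‖·‖₂² with all coordinates in {−1, 0, 1}, for which ‖x*‖₂² = card(x*). -/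
open BigOperators

/-- If `g : ℝⁿ → ℝ` is nonnegative, its zeros have integer coordinates, and `g` is
entrywise periodic with period 2, and the feasible set `G = {x : g x = 0}` is
nonempty, then the infimum over `G` of `‖x‖₂²` equals the infimum over `G` of
`card(x)`; moreover there is a minimizer of `‖·‖₂²` over `G` with coordinates in
`{−1, 0, 1}` whose squared norm equals its cardinality. -/
theorem min_l2_eq_min_card {n : ℕ} (g : (Fin n → ℝ) → ℝ)
    (hg0 : ∀ x, 0 ≤ g x)
    (hint : ∀ x, g x = 0 → ∀ i, ∃ k : ℤ, x i = (k : ℝ))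
    (hper : ∀ (x : Fin n → ℝ) (i : Fin n), g (x + (2 : ℝ) • (Pi.single i 1 : Fin n → ℝ)) = g x)
    (hne : ∃ x, g x = 0) :
    sInf {y : ℝ | ∃ x, g x = 0 ∧ y = ∑ i, x i ^ 2} =
      sInf {y : ℝ | ∃ x, g x = 0 ∧ y = ({i | x i ≠ 0} : Set (Fin n)).ncard} ∧
    ∃ x : Fin n → ℝ, g x = 0 ∧ (∀ i, x i = -1 ∨ x i = 0 ∨ x i = 1) ∧
      (∀ y, g y = 0 → ∑ i, x i ^ 2 ≤ ∑ i, y i ^ 2) ∧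
      ∑ i, x i ^ 2 = ({i | x i ≠ 0} : Set (Fin n)).ncard := by
  classical
  -- single-coordinate integer shift
  have hshift : ∀ (x : Fin n → ℝ) (i : Fin n) (k : ℤ),
      g (x + ((2 * (k : ℝ))) • (Pi.single i 1 : Fin n → ℝ)) = g x := by
    intro x i k
    induction k using Int.induction_on with
    | zero => simp
    | succ k ih =>
        have h1 : x + (2 * ((((k : ℤ) + 1 : ℤ)) : ℝ)) • (Pi.single i 1 : Fin n → ℝ)
            = (x + (2 * (((k : ℤ) : ℤ) : ℝ)) • (Pi.single i 1 : Fin n → ℝ))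
              + (2 : ℝ) • (Pi.single i 1 : Fin n → ℝ) := by push_cast; module
        rw [h1, hper]
        exact_mod_cast ih
    | pred k ih =>
        have h1 : x + (2 * (((-(k : ℤ) : ℤ)) : ℝ)) • (Pi.single i 1 : Fin n → ℝ)
            = (x + (2 * (((-(k : ℤ) - 1 : ℤ)) : ℝ)) • (Pi.single i 1 : Fin n → ℝ))
              + (2 : ℝ) • (Pi.single i 1 : Fin n → ℝ) := by push_cast; module
        have ih' : g (x + (2 * (((-(k : ℤ) : ℤ)) : ℝ)) • (Pi.single i 1 : Fin n → ℝ)) = g x := by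
          exact_mod_cast ih
        rw [h1, hper] at ih'
        exact_mod_cast ih'
  -- multi-coordinate shift
  have hmulti : ∀ (x : Fin n → ℝ) (m : Fin n → ℤ),
      g (x + fun i => 2 * ((m i : ℝ))) = g x := by
    intro x m
    have key : ∀ s : Finset (Fin n),
        g (x + fun i => if i ∈ s then 2 * ((m i : ℝ)) else 0) = g x := by
      intro s
      induction s using Finset.induction with
      | empty =>
          have h0 : (x + fun _ : Fin n => (0:ℝ)) = x := by funext j; simp
          simp only [Finset.notMem_empty, if_false, h0]
      | @insert a s ha ih =>
          have heq : (x + fun i => if i ∈ insert a s then 2 * ((m i : ℝ)) else 0)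
              = (x + fun i => if i ∈ s then 2 * ((m i : ℝ)) else 0)
                + (2 * ((m a : ℝ))) • (Pi.single a 1 : Fin n → ℝ) := by
            funext j
            by_cases hj : j = a
            · subst hj
              simp [ha, Pi.single_apply]
            · simp [Pi.single_apply, hj, Finset.mem_insert]
          rw [heq, hshift, ih]
    have := key Finset.univ
    simpa using this
  -- reduction lemma
  have hred : ∀ x, g x = 0 → ∃ r : Fin n → ℝ, g r = 0 ∧ (∀ i, r i = 0 ∨ r i = 1) ∧
      (∀ i, r i ≠ 0 → x i ≠ 0) := by
    intro x hx
    choose k hk using hint x hx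
    set e : Fin n → ℤ := fun i => if Even (k i) then 0 else 1 with he
    set m : Fin n → ℤ := fun i => (e i - k i) / 2 with hm
    have hdiv : ∀ i, 2 * m i = e i - k i := by
      intro i
      have : Even (e i - k i) := by
        by_cases h : Even (k i)
        · simp only [he, h, if_pos]
          simpa using h.neg
        · simp only [he, h, if_neg, not_false_iff]
          have : Odd (k i) := Int.not_even_iff_odd.mp h
          rcases this with ⟨c, hc⟩
          exact ⟨-c, by omega⟩
      obtain ⟨c, hc⟩ := this
      simp only [hm]
      omega
    refine ⟨x + fun i => 2 * ((m i : ℝ)), by rw [hmulti]; exact hx, ?_, ?_⟩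
    · intro i
      have : x i + 2 * ((m i : ℝ)) = (e i : ℝ) := by
        rw [hk i]
        have : ((2 * m i : ℤ) : ℝ) = ((e i - k i : ℤ) : ℝ) := by rw [hdiv]
        push_cast at this
        linarith
      simp only [Pi.add_apply, this]
      by_cases h : Even (k i)
      · left; simp [he, h]
      · right; simp [he, h]
    · intro i hi hxi
      apply hi
      have hki : k i = 0 := by
        have := hk i
        rw [hxi] at this
        exact_mod_cast this.symm
      have hmi : m i = 0 := by simp [hm, he, hki]
      simp [hxi, hmi]
  -- card lower bound for zeros (real valued)
  have hcard_eq : ∀ y : Fin n → ℝ,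
      (({i | y i ≠ 0} : Set (Fin n)).ncard : ℝ)
        = ∑ i, (if y i ≠ 0 then (1:ℝ) else 0) := by
    intro y
    rw [Finset.sum_boole]
    congr 1
    rw [Set.ncard_eq_toFinset_card']
    congr 1
    ext i
    simp
  have hlb : ∀ y, g y = 0 →
      (({i | y i ≠ 0} : Set (Fin n)).ncard : ℝ) ≤ ∑ i, y i ^ 2 := by
    intro y hy
    rw [hcard_eq]
    apply Finset.sum_le_sum
    intro i _
    by_cases h : y i = 0
    · simp [h]
    · simp only [h, ne_eq, not_false_iff, if_pos, if_true]
      obtain ⟨c, hc⟩ := hint y hy i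
      have hc0 : c ≠ 0 := by
        intro h0; apply h; rw [hc, h0]; norm_num
      have : (1:ℤ) ≤ c ^ 2 := by nlinarith [sq_nonneg c, Int.one_le_abs hc0, sq_abs c]
      have : (1:ℝ) ≤ (c:ℝ) ^ 2 := by exact_mod_cast this
      rw [hc]; exact this
  -- for 0/1 vectors, sum of squares equals card
  have hsq : ∀ r : Fin n → ℝ, (∀ i, r i = 0 ∨ r i = 1) →
      ∑ i, r i ^ 2 = (({i | r i ≠ 0} : Set (Fin n)).ncard : ℝ) := by
    intro r hr
    rw [hcard_eq]
    apply Finset.sum_congr rfl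
    intro i _
    rcases hr i with h | h <;> simp [h]
  -- minimum cardinality
  set C : Set ℕ := {c : ℕ | ∃ x, g x = 0 ∧ c = ({i | x i ≠ 0} : Set (Fin n)).ncard} with hC
  have hCne : C.Nonempty := by
    obtain ⟨x, hx⟩ := hne
    exact ⟨_, x, hx, rfl⟩
  set N := sInf C with hN
  obtain ⟨x0, hx0, hx0c⟩ := Nat.sInf_mem hCne
  obtain ⟨r, hr0, hr01, hrsupp⟩ := hred x0 hx0
  have hrcard_le : ({i | r i ≠ 0} : Set (Fin n)).ncard ≤ ({i | x0 i ≠ 0} : Set (Fin n)).ncard := by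
    apply Set.ncard_le_ncard
    · intro i hi; exact hrsupp i hi
    · exact Set.toFinite _
  have hrC : ({i | r i ≠ 0} : Set (Fin n)).ncard ∈ C := ⟨r, hr0, rfl⟩
  have hrcard : ({i | r i ≠ 0} : Set (Fin n)).ncard = N := by
    have h1 := Nat.sInf_le hrC
    omega
  have hrsum : ∑ i, r i ^ 2 = (N : ℝ) := by
    rw [hsq r hr01, hrcard]
  -- minimizer property
  have hmin : ∀ y, g y = 0 → ∑ i, r i ^ 2 ≤ ∑ i, y i ^ 2 := by
    intro y hy
    rw [hrsum]
    refine le_trans ?_ (hlb y hy)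
    have : N ≤ ({i | y i ≠ 0} : Set (Fin n)).ncard := Nat.sInf_le ⟨y, hy, rfl⟩
    exact_mod_cast this
  constructor
  · -- infima equality
    have hAle : ∀ a ∈ {y : ℝ | ∃ x, g x = 0 ∧ y = ∑ i, x i ^ 2}, (N:ℝ) ≤ a := by
      rintro a ⟨y, hy, rfl⟩
      refine le_trans ?_ (hlb y hy)
      have : N ≤ ({i | y i ≠ 0} : Set (Fin n)).ncard := Nat.sInf_le ⟨y, hy, rfl⟩
      exact_mod_cast this
    have hBle : ∀ b ∈ {y : ℝ | ∃ x, g x = 0 ∧ y = (({i | x i ≠ 0} : Set (Fin n)).ncard : ℝ)},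
        (N:ℝ) ≤ b := by
      rintro b ⟨y, hy, rfl⟩
      have : N ≤ ({i | y i ≠ 0} : Set (Fin n)).ncard := Nat.sInf_le ⟨y, hy, rfl⟩
      exact_mod_cast this
    have hAmem : (N:ℝ) ∈ {y : ℝ | ∃ x, g x = 0 ∧ y = ∑ i, x i ^ 2} :=
      ⟨r, hr0, hrsum.symm⟩
    have hBmem : (N:ℝ) ∈ {y : ℝ | ∃ x, g x = 0 ∧ y = (({i | x i ≠ 0} : Set (Fin n)).ncard : ℝ)} := by
      refine ⟨r, hr0, ?_⟩
      exact_mod_cast hrcard.symm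
    have hA : sInf {y : ℝ | ∃ x, g x = 0 ∧ y = ∑ i, x i ^ 2} = (N:ℝ) :=
      le_antisymm (csInf_le ⟨(N:ℝ), hAle⟩ hAmem) (le_csInf ⟨_, hAmem⟩ hAle)
    have hB : sInf {y : ℝ | ∃ x, g x = 0 ∧ y = (({i | x i ≠ 0} : Set (Fin n)).ncard : ℝ)} = (N:ℝ) :=
      le_antisymm (csInf_le ⟨(N:ℝ), hBle⟩ hBmem) (le_csInf ⟨_, hBmem⟩ hBle)
    rw [hA, hB]
  · refine ⟨r, hr0, fun i => ?_, hmin, ?_⟩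
    · rcases hr01 i with h | h
      · right; left; exact h
      · right; right; exact h
    · rw [hsq r hr01]
end
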